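/- arXiv:1401.7719 — 3 statements merged into one kernel-verified Lean document; each statement's English description precedes it below -/
import Mathlib

section
/- Let A be a normal subgroup of a finite group G such that G/A is a π-group, and let U be a π-Hall subgroup of A. Then there exists a π-Hall subgroup H of G with H ∩ A = U if and only if the G-conjugacy class of U equals its A-conjugacy class, i.e., U^G = U^A. -/
def IsPiNumber (π : Set ℕ) (n : ℕ) : Prop := ∀ p : ℕ, p.Prime → p ∣ n → p ∈ π

def IsHallSubgroup {G : Type*} [Group G] (π : Set ℕ) (H : Subgroup G) : Prop :=
  IsPiNumber π (Nat.card H) ∧ ∀ p : ℕ, p.Prime → p ∣ H.index → p ∉ π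

def conjSub {G : Type*} [Group G] (g : G) (H : Subgroup G) : Subgroup G :=
  H.map (MulAut.conj g).toMonoidHom

/-!
If `H` is a `π`-Hall subgroup of `G` with `H ∩ A = U`, then `|G : HA|` divides both
the `π'`-number `|G : H|` and the `π`-number `|G : A|`, so `G = AH`; as `H` normalizes `H ∩ A = U`,
every `G`-conjugate of `U` is an `A`-conjugate.

Conversely, if `U^G = U^A`, the Frattini argument gives `G = N_G(U) A`. In `N_G(U)/U` the normal
subgroup `(N_G(U) ∩ A)/U` has order dividing the `π'`-number `|A : U|` and index `|G : A|`, a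
`π`-number, so by Schur–Zassenhaus it has a complement `H/U`. Then `H ∩ A = U` and `HA = G`, whence
`|H| = |U| |G : A|` and `|G : H| = |A : U|`, i.e. `H` is a `π`-Hall subgroup of `G`.
-/

open Subgroup
open scoped Pointwise

namespace IsPiNumber

variable {π : Set ℕ} {m n : ℕ}

theorem mul (hm : IsPiNumber π m) (hn : IsPiNumber π n) : IsPiNumber π (m * n) :=
  fun p hp hpmn => (hp.dvd_mul.1 hpmn).elim (hm p hp) (hn p hp)

theorem of_dvd (hn : IsPiNumber π n) (hmn : m ∣ n) : IsPiNumber π m :=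
  fun p hp hpm => hn p hp (hpm.trans hmn)

-- `IsPiNumber πᶜ n` says that `n` is a `π'`-number; the second half of `IsHallSubgroup` unfolds
-- to it.
theorem coprime (hm : IsPiNumber π m) (hn : IsPiNumber πᶜ n) : Nat.Coprime m n :=
  Nat.coprime_of_dvd fun p hp hpm hpn => hn p hp hpn (hm p hp hpm)

theorem eq_one (hπ : IsPiNumber π n) (hπ' : IsPiNumber πᶜ n) : n = 1 :=
  (Nat.coprime_self n).1 (hπ.coprime hπ')

end IsPiNumber

section Conjugation

variable {G : Type*} [Group G] {U : Subgroup G} {g h : G}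

theorem mem_conjSub {x : G} : x ∈ conjSub g U ↔ g⁻¹ * x * g ∈ U := by
  constructor
  · rintro ⟨u, hu, rfl⟩
    simpa [mul_assoc] using hu
  · intro hx
    refine ⟨g⁻¹ * x * g, hx, ?_⟩
    simp [mul_assoc]

theorem conjSub_mul : conjSub (g * h) U = conjSub g (conjSub h U) := by
  ext x
  simp only [mem_conjSub, mul_inv_rev, mul_assoc]

theorem conjSub_eq_self_iff : conjSub g U = U ↔ g ∈ normalizer (U : Set G) :=
  mem_normalizer_iff_map_conj_eq.symm

theorem conjSub_conjugates_eq_iff {A : Subgroup G} :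
    {K : Subgroup G | ∃ g : G, K = conjSub g⁻¹ U} =
        {K : Subgroup G | ∃ a ∈ A, K = conjSub a⁻¹ U} ↔
      ∀ g : G, ∃ a ∈ A, conjSub g U = conjSub a U := by
  constructor
  · intro hset g
    obtain ⟨a, ha, hga⟩ : conjSub g U ∈ {K : Subgroup G | ∃ a ∈ A, K = conjSub a⁻¹ U} :=
      hset ▸ ⟨g⁻¹, by rw [inv_inv]⟩
    exact ⟨a⁻¹, inv_mem ha, hga⟩
  · intro hconj
    ext K
    constructor
    · rintro ⟨g, rfl⟩
      obtain ⟨a, ha, hga⟩ := hconj g⁻¹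
      exact ⟨a⁻¹, inv_mem ha, by rw [inv_inv, hga]⟩
    · rintro ⟨a, -, rfl⟩
      exact ⟨a, rfl⟩

theorem exists_conjSub_eq_of_sup_eq_top {A H : Subgroup G} [A.Normal]
    (hH : H ≤ normalizer (U : Set G)) (hAH : A ⊔ H = ⊤) (g : G) :
    ∃ a ∈ A, conjSub g U = conjSub a U := by
  obtain ⟨a, ha, h, hh, rfl⟩ : g ∈ (A : Set G) * (H : Set G) := by
    rw [← normal_mul, hAH]
    trivial
  exact ⟨a, ha, by rw [conjSub_mul, conjSub_eq_self_iff.2 (hH hh)]⟩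

/-- The Frattini argument. -/
theorem normalizer_sup_eq_top_of_forall_conjSub {A : Subgroup G}
    (hconj : ∀ g : G, ∃ a ∈ A, conjSub g U = conjSub a U) :
    normalizer (U : Set G) ⊔ A = ⊤ := by
  refine eq_top_iff.2 fun g _ => ?_
  obtain ⟨a, ha, hga⟩ := hconj g
  have hnorm : a⁻¹ * g ∈ normalizer (U : Set G) := by
    rw [← conjSub_eq_self_iff, conjSub_mul, hga, ← conjSub_mul, inv_mul_cancel,
      conjSub_eq_self_iff]
    exact one_mem _
  have hg : a * (a⁻¹ * g) ∈ normalizer (U : Set G) ⊔ A :=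
    mul_mem (mem_sup_right ha) (mem_sup_left hnorm)
  simpa using hg

end Conjugation

section Complements

variable {G : Type*} [Group G]

/-- Schur–Zassenhaus applied to `M / U` inside `G / U`. -/
theorem exists_inf_eq_and_sup_eq_top_of_coprime {U M : Subgroup G} [U.Normal] [M.Normal]
    (hUM : U ≤ M) (hcop : Nat.Coprime (U.relIndex M) M.index) :
    ∃ H : Subgroup G, H ⊓ M = U ∧ H ⊔ M = ⊤ := by
  set f := QuotientGroup.mk' U
  have hf : Function.Surjective f := QuotientGroup.mk'_surjective U
  have hker : f.ker = U := QuotientGroup.ker_mk' U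
  have : (M.map f).Normal := Normal.map ‹_› f hf
  obtain ⟨K, hK⟩ := exists_left_complement'_of_coprime (N := M.map f) <| by
    rw [← relIndex_ker, hker]
    exact hcop.coprime_dvd_right (index_map_dvd M hf)
  have hM : (M.map f).comap f = M := by rw [comap_map_eq, hker, sup_of_le_left hUM]
  refine ⟨K.comap f, ?_, ?_⟩
  · rw [← hM, ← comap_inf, hK.disjoint.eq_bot, MonoidHom.comap_bot, hker]
  · rw [← hM, comap_sup_eq _ _ _ hf, hK.sup_eq_top, comap_top]

theorem exists_inf_eq_and_sup_eq_top_of_normalizer_sup_eq_top {U A : Subgroup G} [A.Normal]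
    (hUA : U ≤ A) (hNA : normalizer (U : Set G) ⊔ A = ⊤)
    (hcop : Nat.Coprime (U.relIndex A) A.index) :
    ∃ H : Subgroup G, H ⊓ A = U ∧ H ⊔ A = ⊤ := by
  set N := normalizer (U : Set G)
  have hUN : U ≤ N := le_normalizer
  have hrel : (U.subgroupOf N).relIndex (A.subgroupOf N) = U.relIndex (A ⊓ N) := by
    rw [← inf_subgroupOf_right A N, relIndex_subgroupOf inf_le_right]
  have hind : (A.subgroupOf N).index = A.index := by
    rw [← relIndex, ← relIndex_sup_right, hNA, relIndex_top_right]
  obtain ⟨H, hHA, hHtop⟩ := exists_inf_eq_and_sup_eq_top_of_coprime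
    (U := U.subgroupOf N) (M := A.subgroupOf N) (subgroupOf_mono N hUA) <| by
      rw [hrel, hind]
      exact hcop.coprime_dvd_left
        (Dvd.intro _ (relIndex_mul_relIndex U (A ⊓ N) A (le_inf hUA hUN) inf_le_left))
  have hHN : H.map N.subtype ≤ N := map_subtype_le H
  refine ⟨H.map N.subtype, ?_, ?_⟩
  · have := congrArg (map N.subtype) hHA
    rwa [map_inf _ _ _ N.subtype_injective, subgroupOf_map_subtype, subgroupOf_map_subtype,
      inf_of_le_left hUN, ← inf_assoc, inf_right_comm, inf_of_le_left hHN] at this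
  · have := congrArg (map N.subtype) hHtop
    rw [Subgroup.map_sup, subgroupOf_map_subtype, ← MonoidHom.range_eq_map, range_subtype] at this
    rw [eq_top_iff, ← hNA]
    exact sup_le (this.ge.trans (sup_le_sup_left inf_le_left _)) le_sup_right

end Complements

section Hall

variable {G : Type*} [Group G] {π : Set ℕ} {H A : Subgroup G}

theorem IsHallSubgroup.sup_eq_top (hH : IsHallSubgroup π H) (hA : IsPiNumber π A.index) :
    H ⊔ A = ⊤ :=
  index_eq_one.1 <| IsPiNumber.eq_one (hA.of_dvd (index_dvd_of_le le_sup_right))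
    (IsPiNumber.of_dvd (π := πᶜ) hH.2 (index_dvd_of_le le_sup_left))

theorem isHallSubgroup_of_sup_eq_top [Finite G] [A.Normal] (hA : IsPiNumber π A.index)
    (hHA : IsHallSubgroup π ((H ⊓ A).subgroupOf A)) (hsup : H ⊔ A = ⊤) :
    IsHallSubgroup π H := by
  have hcard_inf : Nat.card ((H ⊓ A).subgroupOf A) = Nat.card (H ⊓ A : Subgroup G) :=
    Nat.card_congr (subgroupOfEquivOfLe inf_le_right).toEquiv
  have hrel : A.relIndex H = A.index := by
    rw [← relIndex_sup_right, hsup, relIndex_top_right]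
  have hcard : Nat.card H = Nat.card (H ⊓ A : Subgroup G) * A.index :=
    calc Nat.card H = (⊥ : Subgroup G).relIndex H := (relIndex_bot_left H).symm
      _ = (⊥ : Subgroup G).relIndex (H ⊓ A) * (H ⊓ A).relIndex H :=
        (relIndex_mul_relIndex _ _ _ bot_le inf_le_left).symm
      _ = Nat.card (H ⊓ A : Subgroup G) * A.index := by
        rw [relIndex_bot_left, inf_relIndex_left, hrel]
  have hindex : H.index = (H ⊓ A).relIndex A := by
    have hpos : 0 < Nat.card (H ⊓ A : Subgroup G) * A.index :=
      Nat.pos_of_ne_zero (mul_ne_zero Nat.card_pos.ne' index_ne_zero_of_finite)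
    refine Nat.eq_of_mul_eq_mul_left hpos ?_
    calc Nat.card (H ⊓ A : Subgroup G) * A.index * H.index = Nat.card G := by
          rw [← hcard, card_mul_index]
      _ = Nat.card ((H ⊓ A).subgroupOf A) * (H ⊓ A).relIndex A * A.index := by
          rw [relIndex, card_mul_index, card_mul_index]
      _ = Nat.card (H ⊓ A : Subgroup G) * A.index * (H ⊓ A).relIndex A := by
          rw [hcard_inf]
          ring
  exact ⟨hcard ▸ (hcard_inf ▸ hHA.1).mul hA, hindex ▸ hHA.2⟩

end Hall

/-- If `A ⊴ G` with `G/A` a `π`-group and `U` is a `π`-Hall subgroup of `A`, then a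
`π`-Hall subgroup `H` of `G` with `H ∩ A = U` exists iff `U^G = U^A`. -/
theorem hall_extension_iff_class_invariant {G : Type*} [Group G] [Finite G] (π : Set ℕ)
    (A U : Subgroup G) [A.Normal] (hquot : IsPiNumber π A.index)
    (hUA : U ≤ A) (hU : IsHallSubgroup π (U.subgroupOf A)) :
    (∃ H : Subgroup G, IsHallSubgroup π H ∧ H ⊓ A = U) ↔
      {K : Subgroup G | ∃ g : G, K = conjSub g⁻¹ U} =
        {K : Subgroup G | ∃ a ∈ A, K = conjSub a⁻¹ U} := by
  rw [conjSub_conjugates_eq_iff]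
  constructor
  · rintro ⟨H, hH, rfl⟩
    have hnorm : H ≤ normalizer ((H ⊓ A : Subgroup G) : Set G) := by
      rw [inf_comm]
      exact normal_subgroupOf_iff_le_normalizer_inf.1 inferInstance
    exact exists_conjSub_eq_of_sup_eq_top hnorm (sup_comm H A ▸ hH.sup_eq_top hquot)
  · intro hconj
    obtain ⟨H, hHA, hsup⟩ := exists_inf_eq_and_sup_eq_top_of_normalizer_sup_eq_top hUA
      (normalizer_sup_eq_top_of_forall_conjSub hconj) (hquot.coprime (π := π) hU.2).symm
    exact ⟨H, isHallSubgroup_of_sup_eq_top hquot (hHA ▸ hU) hsup, hHA⟩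
end

section
/- Let S be a nonabelian simple subnormal subgroup of a finite group G, let U be a π-Hall subgroup of S, let g₁,…,gₙ be a right transversal of N_G(S) in G, and let V = ⟨U^{g₁},…,U^{gₙ}⟩. Then V is a π-Hall subgroup of the normal closure ⟨S^G⟩ of S in G. -/
/-- `H` is subnormal in `G`: there is a chain from `H` to `⊤` with each term
normal in the next. -/
def IsSubnormalIn {G : Type*} [Group G] (H : Subgroup G) : Prop :=
  ∃ n : ℕ, ∃ c : Fin (n + 1) → Subgroup G, c 0 = H ∧ c (Fin.last n) = ⊤ ∧
    ∀ i : Fin n, c i.castSucc ≤ c i.succ ∧ ((c i.castSucc).subgroupOf (c i.succ)).Normal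

/-! By Wielandt's theorem, distinct subnormal nonabelian simple subgroups commute. The conjugates
`S^{gᵢ}` are pairwise distinct and are all the conjugates of `S`, so `⟨S^G⟩` is their internal
direct product (independent because each has trivial centre), of order `|S|ⁿ`, and inside it
`V = ∏ U^{gᵢ}` has order `|U|ⁿ`. Hence `|V|` is a `π`-number and `|⟨S^G⟩ : V| = |S : U|ⁿ` is a
`π'`-number. -/

open Subgroup ConjAct
open scoped Pointwise

def IsNonabelianSimple (H : Type*) [Group H] : Prop :=
  IsSimpleGroup H ∧ ¬ ∀ a b : H, a * b = b * a

namespace IsNonabelianSimple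

variable {H K : Type*} [Group H] [Group K]

theorem of_mulEquiv (e : H ≃* K) (hH : IsNonabelianSimple H) : IsNonabelianSimple K := by
  have := hH.1
  refine ⟨e.symm.isSimpleGroup, fun hcomm => hH.2 fun a b => e.injective ?_⟩
  simpa using hcomm (e a) (e b)

theorem commutator_top (hH : IsNonabelianSimple H) :
    ⁅(⊤ : Subgroup H), ⊤⁆ = (⊤ : Subgroup H) := by
  have := hH.1
  refine (commutator_normal ⊤ ⊤).eq_bot_or_eq_top.resolve_left fun hbot => hH.2 fun a b => ?_
  rw [commutator_eq_bot_iff_le_centralizer] at hbot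
  exact mem_centralizer_iff.mp (hbot (mem_top b)) a (mem_top a)

theorem center_eq_bot (hH : IsNonabelianSimple H) : center H = ⊥ := by
  have := hH.1
  refine (inferInstance : (center H).Normal).eq_bot_or_eq_top.resolve_right fun htop =>
    hH.2 fun a b => ?_
  exact (mem_center_iff.mp (htop ▸ mem_top a) b).symm

end IsNonabelianSimple

namespace Subgroup

variable {G : Type*} [Group G]

theorem commutator_self_of_isNonabelianSimple {S : Subgroup G} (hS : IsNonabelianSimple S) :
    ⁅S, S⁆ = S := by
  rw [← S.range_subtype, MonoidHom.range_eq_map, ← map_commutator, hS.commutator_top]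

theorem inf_centralizer_eq_bot_of_isNonabelianSimple {S : Subgroup G}
    (hS : IsNonabelianSimple S) : S ⊓ centralizer S = ⊥ := by
  refine eq_bot_iff.mpr fun x ⟨hxS, hxC⟩ => ?_
  have hx : (⟨x, hxS⟩ : S) ∈ center S :=
    mem_center_iff.mpr fun y => Subtype.ext (mem_centralizer_iff.mp hxC y y.2)
  rw [hS.center_eq_bot, mem_bot] at hx
  exact mem_bot.mpr (congrArg Subtype.val hx)

theorem ne_bot_of_isNonabelianSimple {S : Subgroup G} (hS : IsNonabelianSimple S) : S ≠ ⊥ :=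
  (nontrivial_iff_ne_bot S).mp hS.1.toNontrivial

theorem card_pointwise_smul {α : Type*} [Group α] [MulDistribMulAction α G] (a : α)
    (H : Subgroup G) : Nat.card ↥(a • H) = Nat.card H :=
  Nat.card_congr (equivSMul a H).toEquiv.symm

/-- Climbing a subnormal series from `S`, the three subgroups lemma and `⁅S, S⁆ = S` carry
`⁅S, N ⊓ K⁆ = ⊥` from each term `K` to the next. -/
theorem commutator_eq_bot_of_commutator_inf_eq_bot {S N K : Subgroup G} (hSS : ⁅S, S⁆ = S)
    [N.Normal] (hK : K.IsSubnormal) (hSK : S ≤ K) (h : ⁅S, N ⊓ K⁆ = ⊥) : ⁅S, N⁆ = ⊥ := by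
  induction hK with
  | top => simpa using h
  | step K K' hKK' _ hKn ih =>
    refine ih (hSK.trans hKK') ?_
    rw [normal_subgroupOf_iff_le_normalizer hKK'] at hKn
    have hle : ⁅S, N ⊓ K'⁆ ≤ N ⊓ K :=
      le_inf ((commutator_mono le_rfl inf_le_left).trans (commutator_le_right S N))
        ((commutator_mono hSK inf_le_right).trans (le_normalizer_iff_commutator_le_left.mp hKn))
    have h₁ : ⁅⁅S, N ⊓ K'⁆, S⁆ = ⊥ :=
      eq_bot_iff.mpr ((commutator_mono hle le_rfl).trans (commutator_comm (N ⊓ K) S ▸ h).le)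
    have h₂ : ⁅⁅N ⊓ K', S⁆, S⁆ = ⊥ := by rwa [commutator_comm (N ⊓ K') S]
    simpa only [hSS] using commutator_commutator_eq_bot_of_rotate h₁ h₂

theorem le_or_commutator_eq_bot_of_isSubnormal {S : Subgroup G} (hS : S.IsSubnormal)
    (hSs : IsNonabelianSimple S) (N : Subgroup G) [N.Normal] : S ≤ N ∨ ⁅S, N⁆ = ⊥ := by
  have := hSs.1
  rcases (inferInstance : (N.subgroupOf S).Normal).eq_bot_or_eq_top with h | h
  · refine Or.inr (commutator_eq_bot_of_commutator_inf_eq_bot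
      (commutator_self_of_isNonabelianSimple hSs) hS le_rfl ?_)
    rw [subgroupOf_eq_bot, disjoint_iff] at h
    rw [h, commutator_bot_right]
  · exact Or.inl (subgroupOf_eq_top.mp h)

/-- Wielandt. By induction on `|G|`: `T` lies in a proper normal subgroup `M`, and either `S`
centralizes `M` or both lie in `M`. -/
theorem commutator_eq_bot_of_isSubnormal_of_ne [Finite G] {S T : Subgroup G}
    (hS : S.IsSubnormal) (hT : T.IsSubnormal) (hSs : IsNonabelianSimple S)
    (hTs : IsNonabelianSimple T) (hST : S ≠ T) : ⁅S, T⁆ = ⊥ := by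
  induction hG : Nat.card G using Nat.strong_induction_on generalizing G with
  | _ c ih =>
  obtain rfl | ⟨M, hM, hTM, hMtop⟩ := hT.lt_normal
  · have := hTs.1
    have : IsSimpleGroup G := topEquiv.symm.isSimpleGroup
    exact absurd ((hS.eq_bot_or_top_of_isSimpleGroup this).resolve_left
      (ne_bot_of_isNonabelianSimple hSs)) hST
  rcases le_or_commutator_eq_bot_of_isSubnormal hS hSs M with hSM | hSM
  · have hcard : Nat.card M < c := by
      rw [← hG, ← M.index_mul_card]
      exact lt_mul_of_one_lt_left Nat.card_pos (one_lt_index_of_ne_top hMtop.ne)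
    have hne : S.subgroupOf M ≠ T.subgroupOf M := by
      rwa [Ne, subgroupOf_inj, inf_eq_left.mpr hSM, inf_eq_left.mpr hTM]
    have hcomm := ih _ hcard hS.subgroupOf hT.subgroupOf
      (hSs.of_mulEquiv (subgroupOfEquivOfLe hSM).symm)
      (hTs.of_mulEquiv (subgroupOfEquivOfLe hTM).symm) hne rfl
    rw [← map_subgroupOf_eq_of_le hSM, ← map_subgroupOf_eq_of_le hTM, ← map_commutator, hcomm,
      map_bot]
  · exact eq_bot_iff.mpr ((commutator_mono le_rfl hTM).trans hSM.le)

theorem toConjAct_smul_eq_toConjAct_smul_iff {x y : G} {H : Subgroup G} :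
    toConjAct x • H = toConjAct y • H ↔ y⁻¹ * x ∈ normalizer (H : Set G) := by
  rw [← conjAct_pointwise_smul_iff, toConjAct_mul, toConjAct_inv, mul_smul, inv_smul_eq_iff]

theorem normalClosure_eq_iSup_toConjAct_smul (H : Subgroup G) :
    normalClosure (H : Set G) = ⨆ x : G, toConjAct x • H := by
  rw [normalClosure, iSup_eq_closure]
  congr 1
  ext y
  simp only [Group.mem_conjugatesOfSet_iff, isConj_iff, Set.mem_iUnion, SetLike.mem_coe,
    mem_pointwise_smul_iff_inv_smul_mem, ← toConjAct_inv, toConjAct_smul]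
  constructor
  · rintro ⟨a, ha, c, rfl⟩
    exact ⟨c, by simpa [mul_assoc] using ha⟩
  · rintro ⟨c, hc⟩
    exact ⟨_, hc, c, by group⟩

section Transversal

variable {ι : Type*}

def IsRightTransversal (N : Subgroup G) (g : ι → G) : Prop :=
  ∀ x : G, ∃! i, x * (g i)⁻¹ ∈ N

variable {H : Subgroup G} {g : ι → G}

theorem IsRightTransversal.exists_toConjAct_smul_eq
    (hg : IsRightTransversal (normalizer (H : Set G)) g) (x : G) :
    ∃ i, toConjAct x • H = toConjAct (g i)⁻¹ • H := by
  obtain ⟨i, hi, -⟩ := hg x⁻¹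
  exact ⟨i, toConjAct_smul_eq_toConjAct_smul_iff.mpr (by simpa using inv_mem hi)⟩

theorem IsRightTransversal.injective_toConjAct_smul
    (hg : IsRightTransversal (normalizer (H : Set G)) g) :
    Function.Injective fun i => toConjAct (g i)⁻¹ • H := fun i j hij =>
  (hg (g j)).unique (by simpa using toConjAct_smul_eq_toConjAct_smul_iff.mp hij)
    (by simp [one_mem])

theorem IsRightTransversal.normalClosure_eq_iSup
    (hg : IsRightTransversal (normalizer (H : Set G)) g) :
    normalClosure (H : Set G) = ⨆ i, toConjAct (g i)⁻¹ • H := by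
  rw [normalClosure_eq_iSup_toConjAct_smul]
  refine le_antisymm (iSup_le fun x => ?_)
    (iSup_le fun i => le_iSup (fun x : G => toConjAct x • H) (g i)⁻¹)
  obtain ⟨i, hi⟩ := hg.exists_toConjAct_smul_eq x
  exact hi ▸ le_iSup (fun i => toConjAct (g i)⁻¹ • H) i

theorem IsRightTransversal.commutator_toConjAct_smul_eq_bot [Finite G]
    (hg : IsRightTransversal (normalizer (H : Set G)) g) (hH : H.IsSubnormal)
    (hHs : IsNonabelianSimple H) :
    Pairwise fun i j => ⁅toConjAct (g i)⁻¹ • H, toConjAct (g j)⁻¹ • H⁆ = ⊥ := fun _ _ hij =>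
  commutator_eq_bot_of_isSubnormal_of_ne (hH.smul _) (hH.smul _)
    (hHs.of_mulEquiv (equivSMul _ H)) (hHs.of_mulEquiv (equivSMul _ H))
    (hg.injective_toConjAct_smul.ne hij)

end Transversal

section CommutingFamily

variable {ι : Type*} {H : ι → Subgroup G}

theorem iSupIndep_of_commutator_eq_bot (hcomm : Pairwise fun i j => ⁅H i, H j⁆ = ⊥)
    (hcent : ∀ i, H i ⊓ centralizer (H i) = ⊥) : iSupIndep H := by
  refine iSupIndep_def.mpr fun i => disjoint_iff.mpr (eq_bot_iff.mpr ?_)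
  rw [← hcent i]
  exact inf_le_inf_left _
    (iSup₂_le fun j hj => commutator_eq_bot_iff_le_centralizer.mp (hcomm hj))

theorem card_iSup_of_commutator_eq_bot [Fintype ι] (hcomm : Pairwise fun i j => ⁅H i, H j⁆ = ⊥)
    (hind : iSupIndep H) : Nat.card ↥(⨆ i, H i) = ∏ i, Nat.card ↥(H i) := by
  have hcomm' : Pairwise fun i j => ∀ x y : G, x ∈ H i → y ∈ H j → Commute x y :=
    fun i j hij x y hx hy =>
      (mem_centralizer_iff.mp (commutator_eq_bot_iff_le_centralizer.mp (hcomm hij) hx) y hy).symm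
  rw [← noncommPiCoprod_range (hcomm := hcomm'),
    ← Nat.card_congr (MonoidHom.ofInjective
      (injective_noncommPiCoprod_of_iSupIndep hind)).toEquiv, Nat.card_pi]

end CommutingFamily

end Subgroup

theorem IsSubnormalIn.isSubnormal {G : Type*} [Group G] {H : Subgroup G}
    (h : IsSubnormalIn H) : H.IsSubnormal := by
  obtain ⟨n, c, rfl, hlast, hstep⟩ := h
  exact Fin.reverseInduction (motive := fun i => (c i).IsSubnormal) (hlast ▸ .top)
    (fun i hi => .step _ _ (hstep i).1 hi (hstep i).2) 0

theorem conjSub_eq_toConjAct_smul {G : Type*} [Group G] (g : G) (H : Subgroup G) :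
    conjSub g H = toConjAct g • H :=
  rfl

theorem IsHallSubgroup.of_card_eq_pow {π : Set ℕ} {K K' : Type*} [Group K] [Group K'] [Finite K]
    {H : Subgroup K} {H' : Subgroup K'} (hH : IsHallSubgroup π H) (n : ℕ)
    (hcard : Nat.card H' = Nat.card H ^ n) (hcard' : Nat.card K' = Nat.card K ^ n) :
    IsHallSubgroup π H' := by
  have hindex : H'.index = H.index ^ n := by
    refine Nat.eq_of_mul_eq_mul_right (pow_pos (Nat.card_pos (α := H)) n) ?_
    calc H'.index * Nat.card H ^ n = Nat.card K' := by rw [← hcard, index_mul_card]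
      _ = H.index ^ n * Nat.card H ^ n := by rw [hcard', ← mul_pow, index_mul_card]
  exact ⟨fun p hp hdvd => hH.1 p hp (hp.dvd_of_dvd_pow (hcard ▸ hdvd)),
    fun p hp hdvd => hH.2 p hp (hp.dvd_of_dvd_pow (hindex ▸ hdvd))⟩

/-- If `S` is a nonabelian simple subnormal subgroup of `G`, `U` a `π`-Hall subgroup of
`S`, `g₁, …, gₙ` a right transversal of `N_G(S)` in `G`, and `V = ⟨U^{g₁}, …, U^{gₙ}⟩`,
then `V` is a `π`-Hall subgroup of the normal closure `⟨S^G⟩`. -/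
theorem hall_of_normal_closure {G : Type*} [Group G] [Finite G] (π : Set ℕ)
    (S U : Subgroup G) (hsub : IsSubnormalIn S) (hsimple : IsSimpleGroup S)
    (hnonab : ¬ ∀ a b : S, a * b = b * a)
    (hUS : U ≤ S) (hU : IsHallSubgroup π (U.subgroupOf S))
    (n : ℕ) (g : Fin n → G)
    (htrans : ∀ x : G, ∃! i : Fin n, x * (g i)⁻¹ ∈ Subgroup.normalizer (S : Set G)) :
    IsHallSubgroup π
      ((⨆ i : Fin n, conjSub (g i)⁻¹ U).subgroupOf (Subgroup.normalClosure (S : Set G))) := by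
  have hSs : IsNonabelianSimple S := ⟨hsimple, hnonab⟩
  have hg : IsRightTransversal (normalizer (S : Set G)) g := htrans
  have hcommS := hg.commutator_toConjAct_smul_eq_bot hsub.isSubnormal hSs
  have hindS : iSupIndep fun i => toConjAct (g i)⁻¹ • S :=
    iSupIndep_of_commutator_eq_bot hcommS fun i =>
      inf_centralizer_eq_bot_of_isNonabelianSimple (hSs.of_mulEquiv (equivSMul _ S))
  have hUS' : ∀ i, toConjAct (g i)⁻¹ • U ≤ toConjAct (g i)⁻¹ • S := fun i =>
    pointwise_smul_le_pointwise_smul_iff.mpr hUS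
  have hcommU : Pairwise fun i j => ⁅toConjAct (g i)⁻¹ • U, toConjAct (g j)⁻¹ • U⁆ = ⊥ :=
    fun i j hij => eq_bot_iff.mpr ((commutator_mono (hUS' i) (hUS' j)).trans (hcommS hij).le)
  have hV : ⨆ i, toConjAct (g i)⁻¹ • U ≤ normalClosure (S : Set G) :=
    hg.normalClosure_eq_iSup ▸ iSup_mono hUS'
  simp only [conjSub_eq_toConjAct_smul]
  refine hU.of_card_eq_pow n ?_ ?_
  · rw [Nat.card_congr (subgroupOfEquivOfLe hV).toEquiv,
      card_iSup_of_commutator_eq_bot hcommU (hindS.mono hUS'),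
      Nat.card_congr (subgroupOfEquivOfLe hUS).toEquiv]
    simp [card_pointwise_smul]
  · rw [hg.normalClosure_eq_iSup, card_iSup_of_commutator_eq_bot hcommS hindS]
    simp [card_pointwise_smul]
end

section
/- Let π be a set of primes, G a finite group, A ⊴ G, and H a π-Hall subgroup of A such that G = A * N_G(H). Then the index |G : N_G(H)| is a π'-number. -/
namespace Subgroup

variable {G : Type*} [Group G] {A K : Subgroup G}

theorem relIndex_eq_index_of_forall_exists_mul (hAK : ∀ g : G, ∃ a ∈ A, ∃ k ∈ K, g = a * k) :
    K.relIndex A = K.index := by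
  have smul_one : ∀ a : A, a • ((1 : G) : G ⧸ K) = ((a : G) : G ⧸ K) :=
    fun a => congrArg _ (mul_one (a : G))
  have hstab : MulAction.stabilizer A ((1 : G) : G ⧸ K) = K.subgroupOf A := by
    ext a
    rw [MulAction.mem_stabilizer_iff, smul_one, QuotientGroup.eq, mul_one, inv_mem_iff,
      mem_subgroupOf]
  have horbit : MulAction.orbit A ((1 : G) : G ⧸ K) = Set.univ := by
    refine Set.eq_univ_of_forall fun x => QuotientGroup.induction_on x fun g => ?_
    obtain ⟨a, ha, k, hk, rfl⟩ := hAK g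
    exact ⟨⟨a, ha⟩, (smul_one _).trans (QuotientGroup.mk_mul_of_mem a hk).symm⟩
  rw [relIndex, ← hstab, MulAction.index_stabilizer, horbit, Set.ncard_univ, index]

theorem index_normalizer_dvd_relIndex {H : Subgroup G}
    (hAN : ∀ g : G, ∃ a ∈ A, ∃ m ∈ normalizer (H : Set G), g = a * m) :
    (normalizer (H : Set G)).index ∣ H.relIndex A :=
  relIndex_eq_index_of_forall_exists_mul hAN ▸ relIndex_dvd_of_le_left A le_normalizer

end Subgroup

theorem index_normalizer_pi_prime_general {G : Type*} [Group G] (π : Set ℕ)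
    (A H : Subgroup G)
    (hH : IsHallSubgroup π (H.subgroupOf A))
    (hfrat : ∀ g : G, ∃ a ∈ A, ∃ m ∈ Subgroup.normalizer (H : Set G), g = a * m) :
    ∀ p : ℕ, p.Prime → p ∣ (Subgroup.normalizer (H : Set G)).index → p ∉ π :=
  fun p hp hpN => hH.2 p hp (hpN.trans (Subgroup.index_normalizer_dvd_relIndex hfrat))

/-- If `A ⊴ G` and `H` is a `π`-Hall subgroup of `A` with `G = A * N_G(H)`, then
`|G : N_G(H)|` is a `π'`-number. -/
theorem index_normalizer_pi_prime {G : Type*} [Group G] [Finite G] (π : Set ℕ)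
    (A H : Subgroup G) [A.Normal]
    (hHA : H ≤ A) (hH : IsHallSubgroup π (H.subgroupOf A))
    (hfrat : ∀ g : G, ∃ a ∈ A, ∃ m ∈ Subgroup.normalizer (H : Set G), g = a * m) :
    ∀ p : ℕ, p.Prime → p ∣ (Subgroup.normalizer (H : Set G)).index → p ∉ π :=
  index_normalizer_pi_prime_general π A H hH hfrat
end
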